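/- arXiv:1603.00681 — 14 statements merged into one kernel-verified Lean document; each statement's English description precedes it below -/
import Mathlib

section
/- Let a, b be real numbers with a > 0 and b > 0, and let α = (a*b + √(a²b² + 4ab))/2 and β = (a*b − √(a²b² + 4ab))/2. Then for every natural number m, the even-indexed bi-periodic Fibonacci number satisfies q (2m) = a * (α^(2m) − β^(2m)) / ((a*b)^m * (α − β)). (This is the even-index component of the Binet formula of Theorem 2.1.) -/
/-!
Eliminating the odd terms, the even-indexed terms satisfy
`q (n + 2) = (ab + 2) q n - q (n - 2)` for even `n`, so `x m := (ab)^m q (2m)` satisfies a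
second-order recurrence whose characteristic roots are `α²` and `β²` (since
`α² + β² = ab (ab + 2)` and `α² β² = (ab)²`). The standard Binet argument for such a recurrence,
together with `α² - β² = ab (α - β)`, gives the formula.
-/

theorem sub_mul_eq_mul_pow_sub_pow_of_recurrence {R : Type*} [CommRing R] {x : ℕ → R} {u v : R}
    (h0 : x 0 = 0) (hrec : ∀ n, x (n + 2) = (u + v) * x (n + 1) - u * v * x n) (n : ℕ) :
    (u - v) * x n = x 1 * (u ^ n - v ^ n) := by
  induction n using Nat.twoStepInduction with
  | zero => simp [h0]
  | one => ring
  | more n ih ih₁ =>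
    rw [hrec]
    linear_combination (u + v) * ih₁ - u * v * ih

theorem biperiodic_even_recurrence {R : Type*} [CommRing R] {a b : R} {q : ℤ → R}
    (hqe : ∀ n : ℤ, Even n → q n = a * q (n - 1) + q (n - 2))
    (hqo : ∀ n : ℤ, Odd n → q n = b * q (n - 1) + q (n - 2)) {n : ℤ} (hn : Even n) :
    q (n + 2) = (a * b + 2) * q n - q (n - 2) := by
  have h₂ := hqe (n + 2) (hn.add even_two)
  have h₁ := hqo (n + 1) hn.add_one
  have h₀ := hqe n hn
  rw [add_sub_cancel_right, show n + 2 - 1 = n + 1 by ring] at h₂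
  rw [add_sub_cancel_right, show n + 1 - 2 = n - 1 by ring] at h₁
  linear_combination h₂ + a * h₁ - h₀

theorem biperiodic_scaled_even_recurrence {R : Type*} [CommRing R] {a b : R} {q : ℤ → R}
    (hqe : ∀ n : ℤ, Even n → q n = a * q (n - 1) + q (n - 2))
    (hqo : ∀ n : ℤ, Odd n → q n = b * q (n - 1) + q (n - 2)) (n : ℕ) :
    (a * b) ^ (n + 2) * q (2 * (n + 2 : ℕ)) =
      a * b * (a * b + 2) * ((a * b) ^ (n + 1) * q (2 * (n + 1 : ℕ)))
        - (a * b) ^ 2 * ((a * b) ^ n * q (2 * n)) := by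
  have hrec := biperiodic_even_recurrence hqe hqo (n := 2 * (n + 1)) ⟨n + 1, by ring⟩
  push_cast
  rw [show 2 * ((n : ℤ) + 2) = 2 * (n + 1) + 2 by ring, hrec,
    show 2 * ((n : ℤ) + 1) - 2 = 2 * n by ring]
  ring

theorem biperiodic_fib_binet_even (a b : ℝ) (ha : 0 < a) (hb : 0 < b)
    (q : ℤ → ℝ) (hq0 : q 0 = 0) (hq1 : q 1 = 1)
    (hqe : ∀ n : ℤ, Even n → q n = a * q (n - 1) + q (n - 2))
    (hqo : ∀ n : ℤ, Odd n → q n = b * q (n - 1) + q (n - 2))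
    (α β : ℝ)
    (hα : α = (a * b + Real.sqrt (a ^ 2 * b ^ 2 + 4 * (a * b))) / 2)
    (hβ : β = (a * b - Real.sqrt (a ^ 2 * b ^ 2 + 4 * (a * b))) / 2) :
    ∀ m : ℕ, q (2 * m) =
      a * (α ^ (2 * m) - β ^ (2 * m)) / ((a * b) ^ m * (α - β)) := by
  intro m
  have hab : 0 < a * b := mul_pos ha hb
  have hdisc : 0 < a ^ 2 * b ^ 2 + 4 * (a * b) := by positivity
  have hsum : α + β = a * b := by rw [hα, hβ]; ring
  have hprod : α * β = -(a * b) := by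
    rw [hα, hβ]
    linear_combination -(Real.sq_sqrt hdisc.le) / 4
  have hsub : 0 < α - β := by
    rw [hα, hβ]
    ring_nf
    positivity
  have hsq_add : α ^ 2 + β ^ 2 = a * b * (a * b + 2) := by
    linear_combination (α + β + a * b) * hsum - 2 * hprod
  have hsq_mul : α ^ 2 * β ^ 2 = (a * b) ^ 2 := by
    linear_combination (α * β - a * b) * hprod
  have hsq_sub : α ^ 2 - β ^ 2 = a * b * (α - β) := by
    linear_combination (α - β) * hsum
  have hq2 : q 2 = a := by
    simpa [hq0, hq1] using hqe 2 even_two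
  have hbinet := sub_mul_eq_mul_pow_sub_pow_of_recurrence (x := fun m => (a * b) ^ m * q (2 * m))
    (u := α ^ 2) (v := β ^ 2) (by simp [hq0])
    (fun n => by simpa only [hsq_add, hsq_mul] using biperiodic_scaled_even_recurrence hqe hqo n) m
  simp only [pow_one, Nat.cast_one, mul_one, hq2, ← pow_mul] at hbinet
  rw [eq_div_iff (by positivity)]
  apply mul_left_cancel₀ hab.ne'
  rw [hsq_sub] at hbinet
  linear_combination hbinet
end

section
/- Let a, b be real numbers with a > 0 and b > 0, and let α = (a*b + √(a²b² + 4ab))/2 and β = (a*b − √(a²b² + 4ab))/2. Then for every natural number m, the odd-indexed bi-periodic Fibonacci number satisfies q (2m+1) = (α^(2m+1) − β^(2m+1)) / ((a*b)^m * (α − β)). (This is the odd-index component of the Binet formula of Theorem 2.1.) -/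
/-!
Two steps of the bi-periodic recurrence, from one odd index to the next, give the constant
coefficient recurrence `u (m + 2) = (a b + 2) u (m + 1) - u m` for `u m = q (2 m + 1)`.
With `r = a b`, the roots `α, β` of `λ² = r λ + r` give roots `α² / r, β² / r` of
`t² = (r + 2) t - 1`, so `m ↦ (α (α² / r) ^ m - β (β² / r) ^ m) / (α - β)` solves the same
recurrence; it agrees with `u` at `m = 0, 1`, hence everywhere, and it is the right-hand side.
-/

theorem eq_of_rec_two {α : Type*} (f : α → α → α) {u v : ℕ → α}
    (hu : ∀ n, u (n + 2) = f (u (n + 1)) (u n)) (hv : ∀ n, v (n + 2) = f (v (n + 1)) (v n))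
    (h0 : u 0 = v 0) (h1 : u 1 = v 1) : u = v := by
  funext n
  induction n using Nat.twoStepInduction with
  | zero => exact h0
  | one => exact h1
  | more n ihn ihn1 => rw [hu, hv, ihn, ihn1]

theorem geom_sub_geom_rec_two {R : Type*} [CommRing R] {c x y : R}
    (hx : x ^ 2 = c * x - 1) (hy : y ^ 2 = c * y - 1) (A B : R) (n : ℕ) :
    A * x ^ (n + 2) - B * y ^ (n + 2) =
      c * (A * x ^ (n + 1) - B * y ^ (n + 1)) - (A * x ^ n - B * y ^ n) := by
  linear_combination A * x ^ n * hx - B * y ^ n * hy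

theorem sq_div_sq_eq_of_sq_eq {K : Type*} [Field K] {r α : K} (hr : r ≠ 0)
    (hα : α ^ 2 = r * α + r) : (α ^ 2 / r) ^ 2 = (r + 2) * (α ^ 2 / r) - 1 := by
  field_simp
  linear_combination (α ^ 2 + r * α - r) * hα

theorem sq_eq_mul_add_of_two_mul_eq {r s x : ℝ} (hs : s ^ 2 = r ^ 2 + 4 * r)
    (hx : 2 * x = r + s) : x ^ 2 = r * x + r := by
  linear_combination (2 * x - r + s) / 4 * hx + hs / 4

section BiperiodicFib

variable {a b : ℝ} {q : ℤ → ℝ}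

theorem biperiodic_odd_rec (hqe : ∀ n : ℤ, Even n → q n = a * q (n - 1) + q (n - 2))
    (hqo : ∀ n : ℤ, Odd n → q n = b * q (n - 1) + q (n - 2)) {n : ℤ} (hn : Odd n) :
    q (n + 2) = (a * b + 2) * q n - q (n - 2) := by
  have h2 := hqo (n + 2) (hn.add_even even_two)
  have h1 := hqe (n + 1) hn.add_one
  have h0 := hqo n hn
  simp only [add_sub_cancel_right, show n + 2 - 1 = n + 1 by ring,
    show n + 1 - 2 = n - 1 by ring] at h2 h1
  linear_combination h2 + b * h1 - h0

theorem biperiodic_apply_three (hq0 : q 0 = 0) (hq1 : q 1 = 1)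
    (hqe : ∀ n : ℤ, Even n → q n = a * q (n - 1) + q (n - 2))
    (hqo : ∀ n : ℤ, Odd n → q n = b * q (n - 1) + q (n - 2)) : q 3 = a * b + 1 := by
  have h3 := hqo 3 (by decide)
  have h2 := hqe 2 (by decide)
  norm_num [hq0, hq1] at h3 h2
  rw [h3, h2, mul_comm]

end BiperiodicFib

theorem biperiodic_fib_binet_odd (a b : ℝ) (ha : 0 < a) (hb : 0 < b)
    (q : ℤ → ℝ) (hq0 : q 0 = 0) (hq1 : q 1 = 1)
    (hqe : ∀ n : ℤ, Even n → q n = a * q (n - 1) + q (n - 2))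
    (hqo : ∀ n : ℤ, Odd n → q n = b * q (n - 1) + q (n - 2))
    (α β : ℝ)
    (hα : α = (a * b + Real.sqrt (a ^ 2 * b ^ 2 + 4 * (a * b))) / 2)
    (hβ : β = (a * b - Real.sqrt (a ^ 2 * b ^ 2 + 4 * (a * b))) / 2) :
    ∀ m : ℕ, q (2 * m + 1) =
      (α ^ (2 * m + 1) - β ^ (2 * m + 1)) / ((a * b) ^ m * (α - β)) := by
  have hr : a * b ≠ 0 := by positivity
  set s := √(a ^ 2 * b ^ 2 + 4 * (a * b))
  have hs2 : s ^ 2 = (a * b) ^ 2 + 4 * (a * b) := by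
    rw [Real.sq_sqrt (by positivity)]; ring
  have hαβ : α - β ≠ 0 := by
    rw [hα, hβ]; ring_nf; positivity
  have hαr : α ^ 2 = a * b * α + a * b :=
    sq_eq_mul_add_of_two_mul_eq hs2 (by rw [hα]; ring)
  have hβr : β ^ 2 = a * b * β + a * b :=
    sq_eq_mul_add_of_two_mul_eq (s := -s) (by rw [neg_sq, hs2]) (by rw [hβ]; ring)
  have key : (fun m : ℕ => q (2 * m + 1)) =
      fun m => (α * (α ^ 2 / (a * b)) ^ m - β * (β ^ 2 / (a * b)) ^ m) / (α - β) := by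
    refine eq_of_rec_two (fun x y => (a * b + 2) * x - y) (fun n => ?_) (fun n => ?_) ?_ ?_
    · convert biperiodic_odd_rec hqe hqo (n := 2 * n + 3) ⟨n + 1, by ring⟩ using 2 <;>
        push_cast <;> ring_nf
    · rw [geom_sub_geom_rec_two (sq_div_sq_eq_of_sq_eq hr hαr) (sq_div_sq_eq_of_sq_eq hr hβr)]
      ring
    · simp [hq1, div_self hαβ]
    · rw [pow_one, pow_one, Nat.cast_one, show (2 * 1 + 1 : ℤ) = 3 by norm_num,
        biperiodic_apply_three hq0 hq1 hqe hqo, eq_div_iff hαβ]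
      field_simp
      linear_combination (β + a * b) * hβr - (α + a * b) * hαr
  intro m
  rw [congrFun key m, div_pow, div_pow]
  field_simp
  ring
end

section
/- Let a, b be real numbers with a > 0 and b > 0, and let α = (a*b + √(a²b² + 4ab))/2 and β = (a*b − √(a²b² + 4ab))/2. Then for all natural numbers n, r with n ≥ r ≥ 1, the bi-periodic Fibonacci numbers satisfy the Catalan-type identity q (2n−2r) * q (2n+2r) − (q (2n))² = a² * (2*(a*b)^(2r) − α^(4r) − β^(4r)) / ((a*b)^(2r) * (α − β)²). (This is the scalar analogue of Theorem 2.2.) -/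
/-!
On even indices the bi-periodic recurrence collapses to `q (2m + 2) = (ab + 2) q (2m) - q (2m - 2)`,
a constant-coefficient recurrence whose characteristic roots `c = α² / ab` and `d = β² / ab`
satisfy `c d = 1` and `c - d = α - β`. Binet's formula `(α - β) q (2m) = a (cᵐ - dᵐ)` then turns the
Catalan expression into `a² (2 - c²ʳ - d²ʳ) / (α - β)²`, and `c²ʳ = α⁴ʳ / (ab)²ʳ`.
-/

theorem sub_mul_eq_mul_pow_sub_pow_of_rec {R : Type*} [CommRing R] {u : ℕ → R} {c d : R}
    (h0 : u 0 = 0) (hrec : ∀ m, u (m + 2) = (c + d) * u (m + 1) - c * d * u m) (m : ℕ) :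
    (c - d) * u m = u 1 * (c ^ m - d ^ m) := by
  induction m using Nat.twoStepInduction with
  | zero => simp [h0]
  | one => ring
  | more m ih ih' =>
    linear_combination (c - d) * hrec m + (c + d) * ih' - c * d * ih

theorem catalan_pow_sub_pow {R : Type*} [CommRing R] (c d : R) (k r : ℕ) :
    (c ^ k - d ^ k) * (c ^ (k + 2 * r) - d ^ (k + 2 * r)) - (c ^ (k + r) - d ^ (k + r)) ^ 2 =
      -(c * d) ^ k * (c ^ r - d ^ r) ^ 2 := by
  ring

theorem sq_mul_catalan_of_binet {R : Type*} [CommRing R] {x : ℕ → R} {D A c d : R}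
    (hcd : c * d = 1) (hx : ∀ m, D * x m = A * (c ^ m - d ^ m)) (k r : ℕ) :
    D ^ 2 * (x k * x (k + 2 * r) - x (k + r) ^ 2) = A ^ 2 * (2 - c ^ (2 * r) - d ^ (2 * r)) := by
  have hcdr : (c * d) ^ r = 1 := by rw [hcd, one_pow]
  have catalan := catalan_pow_sub_pow c d k r
  rw [hcd, one_pow] at catalan
  linear_combination D * x (k + 2 * r) * hx k + A * (c ^ k - d ^ k) * hx (k + 2 * r)
    - (D * x (k + r) + A * (c ^ (k + r) - d ^ (k + r))) * hx (k + r)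
    + A ^ 2 * catalan + 2 * A ^ 2 * hcdr

theorem sq_div_roots_of_vieta {K : Type*} [Field K] {s α β : K} (hs : s ≠ 0)
    (hsum : α + β = s) (hprod : α * β = -s) :
    α ^ 2 / s + β ^ 2 / s = s + 2 ∧ α ^ 2 / s * (β ^ 2 / s) = 1 ∧ α ^ 2 / s - β ^ 2 / s = α - β := by
  refine ⟨?_, ?_, ?_⟩ <;> field_simp
  · linear_combination (α + β + s) * hsum - 2 * hprod
  · linear_combination (α * β - s) * hprod
  · linear_combination (α - β) * hsum

theorem biperiodicFib_even_rec {a b : ℝ} {q : ℤ → ℝ}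
    (hqe : ∀ n : ℤ, Even n → q n = a * q (n - 1) + q (n - 2))
    (hqo : ∀ n : ℤ, Odd n → q n = b * q (n - 1) + q (n - 2)) (m : ℕ) :
    q (2 * (m + 2 : ℕ)) = (a * b + 2) * q (2 * (m + 1 : ℕ)) - q (2 * m) := by
  have he₂ := hqe (2 * m + 4) ⟨m + 2, by ring⟩
  have ho := hqo (2 * m + 3) ⟨m + 1, by ring⟩
  have he₁ := hqe (2 * m + 2) ⟨m + 1, by ring⟩
  push_cast
  ring_nf at he₂ ho he₁ ⊢
  linear_combination he₂ + a * ho - he₁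

theorem biperiodicFib_even_binet {a b α β : ℝ} {q : ℤ → ℝ} (hab : a * b ≠ 0)
    (hq0 : q 0 = 0) (hq1 : q 1 = 1)
    (hqe : ∀ n : ℤ, Even n → q n = a * q (n - 1) + q (n - 2))
    (hqo : ∀ n : ℤ, Odd n → q n = b * q (n - 1) + q (n - 2))
    (hsum : α + β = a * b) (hprod : α * β = -(a * b)) (m : ℕ) :
    (α - β) * q (2 * m) = a * ((α ^ 2 / (a * b)) ^ m - (β ^ 2 / (a * b)) ^ m) := by
  obtain ⟨hadd, hmul, hsub⟩ := sq_div_roots_of_vieta hab hsum hprod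
  have hq2 : q 2 = a := by simpa [hq0, hq1] using hqe 2 even_two
  have hrec (m : ℕ) : q (2 * (m + 2 : ℕ)) =
      (α ^ 2 / (a * b) + β ^ 2 / (a * b)) * q (2 * (m + 1 : ℕ)) -
        α ^ 2 / (a * b) * (β ^ 2 / (a * b)) * q (2 * m) := by
    rw [hadd, hmul, one_mul]
    exact biperiodicFib_even_rec hqe hqo m
  have := sub_mul_eq_mul_pow_sub_pow_of_rec (u := fun m : ℕ => q (2 * m)) (by simpa using hq0)
    hrec m
  simpa [hsub, hq2] using this

theorem biperiodic_fib_catalan_even_index (a b : ℝ) (ha : 0 < a) (hb : 0 < b)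
    (q : ℤ → ℝ) (hq0 : q 0 = 0) (hq1 : q 1 = 1)
    (hqe : ∀ n : ℤ, Even n → q n = a * q (n - 1) + q (n - 2))
    (hqo : ∀ n : ℤ, Odd n → q n = b * q (n - 1) + q (n - 2))
    (α β : ℝ)
    (hα : α = (a * b + Real.sqrt (a ^ 2 * b ^ 2 + 4 * (a * b))) / 2)
    (hβ : β = (a * b - Real.sqrt (a ^ 2 * b ^ 2 + 4 * (a * b))) / 2) :
    ∀ n r : ℕ, r ≤ n → 1 ≤ r →
      q (2 * (n : ℤ) - 2 * r) * q (2 * (n : ℤ) + 2 * r) - (q (2 * (n : ℤ))) ^ 2 =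
        a ^ 2 * (2 * (a * b) ^ (2 * r) - α ^ (4 * r) - β ^ (4 * r)) /
          ((a * b) ^ (2 * r) * (α - β) ^ 2) := by
  intro n r hrn _
  obtain ⟨k, rfl⟩ := Nat.exists_eq_add_of_le' hrn
  have hab : a * b ≠ 0 := by positivity
  have hsqrt := Real.sq_sqrt (by positivity : (0 : ℝ) ≤ a ^ 2 * b ^ 2 + 4 * (a * b))
  have hsum : α + β = a * b := by rw [hα, hβ]; ring
  have hprod : α * β = -(a * b) := by
    rw [hα, hβ]
    linear_combination (-1 / 4 : ℝ) * hsqrt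
  have hsub : α - β ≠ 0 := by
    rw [hα, hβ]
    ring_nf
    positivity
  have catalan := sq_mul_catalan_of_binet (sq_div_roots_of_vieta hab hsum hprod).2.1
    (x := fun m : ℕ => q (2 * m)) (biperiodicFib_even_binet hab hq0 hq1 hqe hqo hsum hprod) k r
  have hpow (γ : ℝ) : γ ^ (4 * r) = (a * b) ^ (2 * r) * (γ ^ 2 / (a * b)) ^ (2 * r) := by
    rw [← mul_pow, mul_div_cancel₀ _ hab, ← pow_mul]
    ring_nf
  rw [eq_div_iff (by positivity), hpow α, hpow β,
    show 2 * ((k + r : ℕ) : ℤ) - 2 * r = 2 * k by push_cast; ring,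
    show 2 * ((k + r : ℕ) : ℤ) + 2 * r = 2 * (k + 2 * r : ℕ) by push_cast; ring]
  linear_combination (a * b) ^ (2 * r) * catalan
end

section
/- For all real numbers a, b and every natural number n ≥ 1, the bi-periodic Fibonacci numbers satisfy the Cassini-like identity q (2n−2) * q (2n+2) − (q (2n))² = −a². (This is the scalar analogue of the Cassini-like corollary obtained from Theorem 2.2 with r = 1.) -/
/-! The quadratic form `Q(x, y) = a b x y + b x² - a y²` is invariant under one period
`(q (2m), q (2m+1)) ↦ (q (2m+2), q (2m+3))` of the recurrence, so it equals `Q(0, 1) = -a`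
at every period. The Cassini expression at `2m` is `a` times `Q(q (2m-2), q (2m-1))`. -/

section

variable {R : Type*} [CommRing R]

def biperiodicForm (a b x y : R) : R := a * b * x * y + b * x ^ 2 - a * y ^ 2

theorem biperiodicForm_step (a b x y : R) :
    biperiodicForm a b (a * y + x) (b * (a * y + x) + y) = biperiodicForm a b x y := by
  unfold biperiodicForm
  ring

theorem biperiodic_even_step {a : R} {q : ℤ → R}
    (hqe : ∀ n : ℤ, Even n → q n = a * q (n - 1) + q (n - 2)) (k : ℤ) :
    q (2 * (k + 1)) = a * q (2 * k + 1) + q (2 * k) := by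
  rw [hqe _ ⟨k + 1, by ring⟩]
  ring_nf

theorem biperiodic_odd_step {b : R} {q : ℤ → R}
    (hqo : ∀ n : ℤ, Odd n → q n = b * q (n - 1) + q (n - 2)) (k : ℤ) :
    q (2 * (k + 1) + 1) = b * q (2 * (k + 1)) + q (2 * k + 1) := by
  rw [hqo _ ⟨k + 1, by ring⟩]
  ring_nf

theorem biperiodicForm_eq_neg {a b : R} {q : ℤ → R} (hq0 : q 0 = 0) (hq1 : q 1 = 1)
    (hqe : ∀ n : ℤ, Even n → q n = a * q (n - 1) + q (n - 2))
    (hqo : ∀ n : ℤ, Odd n → q n = b * q (n - 1) + q (n - 2)) (m : ℤ) :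
    biperiodicForm a b (q (2 * m)) (q (2 * m + 1)) = -a := by
  have period (k : ℤ) : biperiodicForm a b (q (2 * (k + 1))) (q (2 * (k + 1) + 1)) =
      biperiodicForm a b (q (2 * k)) (q (2 * k + 1)) := by
    rw [biperiodic_odd_step hqo, biperiodic_even_step hqe, biperiodicForm_step]
  induction m using Int.induction_on with
  | zero => simp [biperiodicForm, hq0, hq1]
  | succ k ih => rw [period, ih]
  | pred k ih => rwa [← period, sub_add_cancel]

theorem biperiodic_cassini {a b : R} {q : ℤ → R} (hq0 : q 0 = 0) (hq1 : q 1 = 1)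
    (hqe : ∀ n : ℤ, Even n → q n = a * q (n - 1) + q (n - 2))
    (hqo : ∀ n : ℤ, Odd n → q n = b * q (n - 1) + q (n - 2)) (m : ℤ) :
    q (2 * m - 2) * q (2 * m + 2) - q (2 * m) ^ 2 = -a ^ 2 := by
  obtain ⟨k, rfl⟩ : ∃ k, m = k + 1 := ⟨m - 1, by ring⟩
  have hform := biperiodicForm_eq_neg hq0 hq1 hqe hqo k
  rw [show 2 * (k + 1) - 2 = 2 * k by ring, show 2 * (k + 1) + 2 = 2 * (k + 1 + 1) by ring,
    biperiodic_even_step hqe (k + 1), biperiodic_odd_step hqo, biperiodic_even_step hqe]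
  unfold biperiodicForm at hform
  linear_combination a * hform

end

theorem biperiodic_fib_cassini (a b : ℝ)
    (q : ℤ → ℝ) (hq0 : q 0 = 0) (hq1 : q 1 = 1)
    (hqe : ∀ n : ℤ, Even n → q n = a * q (n - 1) + q (n - 2))
    (hqo : ∀ n : ℤ, Odd n → q n = b * q (n - 1) + q (n - 2)) :
    ∀ n : ℕ, 1 ≤ n →
      q (2 * (n : ℤ) - 2) * q (2 * (n : ℤ) + 2) - (q (2 * (n : ℤ))) ^ 2 = -a ^ 2 :=
  fun n _ => biperiodic_cassini hq0 hq1 hqe hqo n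
end

section
/- Let a, b be real numbers with a > 0 and b > 0, and let α = (a*b + √(a²b² + 4ab))/2 and β = (a*b − √(a²b² + 4ab))/2. Then for all natural numbers n, r with n ≥ r, r even, r ≥ 2 and n odd, the bi-periodic Fibonacci numbers satisfy q (n−r) * q (n+r) − (q n)² = −(2*(a*b)^r − α^(2r) − β^(2r)) / ((a*b)^(r−1) * (α − β)²). (This is the odd-n case of the scalar analogue of the paper's Catalan-type theorem for even r.) -/
/-! Any two roots α, β of λ² - abλ - ab give the Binet-type formulas
(α - β)(ab)^k q(2k) = a(α^{2k} - β^{2k}) and (α - β)(ab)^k q(2k+1) = α^{2k+1} - β^{2k+1},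
by a joint induction on k. For odd indices the Catalan expression then reduces to the ring identity
(A^i - B^i)(A^{i+2r} - B^{i+2r}) - (A^{i+r} - B^{i+r})² = -(AB)^i (A^r - B^r)²,
and αβ = -ab, with i odd and r even, fixes the signs. -/

theorem pow_sub_pow_mul_pow_sub_pow_sub_sq {R : Type*} [CommRing R] (A B : R) (i r : ℕ) :
    (A ^ i - B ^ i) * (A ^ (i + 2 * r) - B ^ (i + 2 * r)) - (A ^ (i + r) - B ^ (i + r)) ^ 2 =
      -(A * B) ^ i * (A ^ r - B ^ r) ^ 2 := by
  ring

section Binet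

variable {R : Type*} [CommRing R] {a b α β : R} {q : ℤ → R}

theorem biperiodic_fib_binet (hq0 : q 0 = 0) (hq1 : q 1 = 1)
    (hqe : ∀ n : ℤ, Even n → q n = a * q (n - 1) + q (n - 2))
    (hqo : ∀ n : ℤ, Odd n → q n = b * q (n - 1) + q (n - 2))
    (hα : α ^ 2 = a * b * α + a * b) (hβ : β ^ 2 = a * b * β + a * b) (k : ℕ) :
    (α - β) * (a * b) ^ k * q (2 * k) = a * (α ^ (2 * k) - β ^ (2 * k)) ∧
      (α - β) * (a * b) ^ k * q (2 * k + 1) = α ^ (2 * k + 1) - β ^ (2 * k + 1) := by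
  induction k with
  | zero => simp [hq0, hq1]
  | succ k ih =>
    obtain ⟨ih_even, ih_odd⟩ := ih
    have step_even : q (2 * k + 2) = a * q (2 * k + 1) + q (2 * k) := by
      have h := hqe (2 * k + 2) ⟨k + 1, by ring⟩
      rwa [show (2 * k + 2 : ℤ) - 1 = 2 * k + 1 by ring,
        show (2 * k + 2 : ℤ) - 2 = 2 * k by ring] at h
    have step_odd : q (2 * k + 3) = b * q (2 * k + 2) + q (2 * k + 1) := by
      have h := hqo (2 * k + 3) ⟨k + 1, by ring⟩
      rwa [show (2 * k + 3 : ℤ) - 1 = 2 * k + 2 by ring,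
        show (2 * k + 3 : ℤ) - 2 = 2 * k + 1 by ring] at h
    have even : (α - β) * (a * b) ^ (k + 1) * q (2 * k + 2) =
        a * (α ^ (2 * k + 2) - β ^ (2 * k + 2)) := by
      rw [step_even]
      linear_combination a * (a * b) * ih_odd + a * b * ih_even
        - a * α ^ (2 * k) * hα + a * β ^ (2 * k) * hβ
    rw [show (2 * ((k + 1 : ℕ) : ℤ)) = 2 * k + 2 by push_cast; ring,
      show (2 * k + 2 + 1 : ℤ) = 2 * k + 3 by ring, step_odd]
    refine ⟨by linear_combination even, ?_⟩
    linear_combination b * even + a * b * ih_odd - α ^ (2 * k + 1) * hα + β ^ (2 * k + 1) * hβ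

theorem biperiodic_fib_catalan_odd (hq0 : q 0 = 0) (hq1 : q 1 = 1)
    (hqe : ∀ n : ℤ, Even n → q n = a * q (n - 1) + q (n - 2))
    (hqo : ∀ n : ℤ, Odd n → q n = b * q (n - 1) + q (n - 2))
    (hα : α ^ 2 = a * b * α + a * b) (hβ : β ^ 2 = a * b * β + a * b)
    (hαβ : α * β = -(a * b)) (p s : ℕ) :
    (α - β) ^ 2 * (a * b) ^ (2 * p + 2 * s) *
        (q (2 * p + 1) * q (2 * (p + 2 * s) + 1) - q (2 * (p + s) + 1) ^ 2) =
      (a * b) ^ (2 * p + 1) * (α ^ (4 * s) + β ^ (4 * s) - 2 * (a * b) ^ (2 * s)) := by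
  have binet := biperiodic_fib_binet hq0 hq1 hqe hqo hα hβ
  have h₁ := (binet p).2
  have h₂ := (binet (p + 2 * s)).2
  have h₃ := (binet (p + s)).2
  push_cast at h₂ h₃
  have catalan := pow_sub_pow_mul_pow_sub_pow_sub_sq α β (2 * p + 1) (2 * s)
  rw [hαβ, Odd.neg_pow ⟨p, rfl⟩] at catalan
  have hαβ_pow : (α * β) ^ (2 * s) = (a * b) ^ (2 * s) := by
    rw [hαβ, Even.neg_pow ⟨s, two_mul s⟩]
  linear_combination (α - β) * (a * b) ^ (p + 2 * s) * q (2 * (p + 2 * s) + 1) * h₁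
    + (α ^ (2 * p + 1) - β ^ (2 * p + 1)) * h₂
    - ((α - β) * (a * b) ^ (p + s) * q (2 * (p + s) + 1)
        + α ^ (2 * (p + s) + 1) - β ^ (2 * (p + s) + 1)) * h₃
    + catalan - 2 * (a * b) ^ (2 * p + 1) * hαβ_pow

end Binet

theorem biperiodic_fib_catalan_odd_n (a b : ℝ) (ha : 0 < a) (hb : 0 < b)
    (q : ℤ → ℝ) (hq0 : q 0 = 0) (hq1 : q 1 = 1)
    (hqe : ∀ n : ℤ, Even n → q n = a * q (n - 1) + q (n - 2))
    (hqo : ∀ n : ℤ, Odd n → q n = b * q (n - 1) + q (n - 2))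
    (α β : ℝ)
    (hα : α = (a * b + Real.sqrt (a ^ 2 * b ^ 2 + 4 * (a * b))) / 2)
    (hβ : β = (a * b - Real.sqrt (a ^ 2 * b ^ 2 + 4 * (a * b))) / 2) :
    ∀ n r : ℕ, r ≤ n → Even r → 2 ≤ r → Odd n →
      q ((n : ℤ) - r) * q ((n : ℤ) + r) - (q (n : ℤ)) ^ 2 =
        -((2 * (a * b) ^ r - α ^ (2 * r) - β ^ (2 * r)) /
          ((a * b) ^ (r - 1) * (α - β) ^ 2)) := by
  have hab : a * b ≠ 0 := (mul_pos ha hb).ne'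
  have hD := Real.sq_sqrt (show 0 ≤ a ^ 2 * b ^ 2 + 4 * (a * b) by positivity)
  have hα_root : α ^ 2 = a * b * α + a * b := by rw [hα]; linear_combination hD / 4
  have hβ_root : β ^ 2 = a * b * β + a * b := by rw [hβ]; linear_combination hD / 4
  have hαβ : α * β = -(a * b) := by rw [hα, hβ]; linear_combination -hD / 4
  have hαβ_ne : α - β ≠ 0 := by
    rw [show α - β = √(a ^ 2 * b ^ 2 + 4 * (a * b)) by rw [hα, hβ]; ring]
    positivity
  intro n r hrn hr hr2 hn
  obtain ⟨s, rfl⟩ := hr.two_dvd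
  obtain ⟨p, rfl⟩ : ∃ p, n = 2 * p + 1 + 2 * s := by
    obtain ⟨m, rfl⟩ := hn
    exact ⟨m - s, by omega⟩
  have key := biperiodic_fib_catalan_odd hq0 hq1 hqe hqo hα_root hβ_root hαβ p s
  have hpow : (a * b) ^ (2 * s - 1) * (a * b) = (a * b) ^ (2 * s) := pow_sub_one_mul (by omega) _
  push_cast
  rw [show (2 * p + 1 + 2 * s - 2 * s : ℤ) = 2 * p + 1 by ring,
    show (2 * p + 1 + 2 * s + 2 * s : ℤ) = 2 * (p + 2 * s) + 1 by ring,
    show (2 * p + 1 + 2 * s : ℤ) = 2 * (p + s) + 1 by ring,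
    neg_div', eq_div_iff (by positivity)]
  apply mul_left_cancel₀ (pow_ne_zero (2 * p + 1) hab)
  linear_combination key + (α - β) ^ 2 * (a * b) ^ (2 * p) *
    (q (2 * p + 1) * q (2 * (p + 2 * s) + 1) - q (2 * (p + s) + 1) ^ 2) * hpow
end

section
/- For all real numbers a, b and all natural numbers n and r with n even, r even and n ≥ r, the bi-periodic Fibonacci numbers q and bi-periodic Lucas numbers l satisfy a*b*(a*b+4)*(q (n−r)*q (n+r) − (q n)²) = a²*(2 − l (2r)). -/
/-- Chebyshev-like sequence: S 0 = 0, S 1 = 1, S (n+2) = t S(n+1) - S n. -/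
def chebS (t : ℝ) : ℕ → ℝ
  | 0 => 0
  | 1 => 1
  | n + 2 => t * chebS t (n + 1) - chebS t n

/-- Lucas companion: L 0 = 2, L 1 = t, same recurrence. -/
def chebL (t : ℝ) : ℕ → ℝ
  | 0 => 2
  | 1 => t
  | n + 2 => t * chebL t (n + 1) - chebL t n

lemma chebS_rec (t : ℝ) (n : ℕ) : chebS t (n + 2) = t * chebS t (n + 1) - chebS t n := rfl
lemma chebL_rec (t : ℝ) (n : ℕ) : chebL t (n + 2) = t * chebL t (n + 1) - chebL t n := rfl

lemma cheb_cassini (t : ℝ) : ∀ s : ℕ,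
    chebS t (s + 1) ^ 2 - t * chebS t (s + 1) * chebS t s + chebS t s ^ 2 = 1 := by
  intro s
  induction s with
  | zero => simp [chebS]
  | succ s ih =>
      rw [chebS_rec]
      linear_combination ih
      
lemma cheb_docagne (t : ℝ) (s : ℕ) : ∀ k : ℕ,
    chebS t k * chebS t (k + s + 1) - chebS t (k + 1) * chebS t (k + s) = -chebS t s := by
  intro k
  induction k with
  | zero => simp [chebS]
  | succ k ih =>
      have h1 : chebS t (k + 1 + s + 1) = chebS t (k + s + 2) := by ring_nf
      have h2 : chebS t (k + 1 + s) = chebS t (k + s + 1) := by ring_nf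
      rw [h1, h2, chebS_rec, chebS_rec]
      linear_combination ih

lemma cheb_shift (t : ℝ) : ∀ m n : ℕ,
    chebS t (m + n + 1) = chebS t (m + 1) * chebS t (n + 1) - chebS t m * chebS t n := by
  have key : ∀ m : ℕ,
      (∀ n, chebS t (m + n + 1) = chebS t (m + 1) * chebS t (n + 1) - chebS t m * chebS t n) ∧
      (∀ n, chebS t (m + 1 + n + 1) = chebS t (m + 1 + 1) * chebS t (n + 1) - chebS t (m + 1) * chebS t n) := by
    intro m
    induction m with
    | zero =>
        refine ⟨fun n => by simp [chebS], fun n => ?_⟩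
        have r1 : chebS t (n + 2) = t * chebS t (n + 1) - chebS t n := chebS_rec t n
        have hS1 : chebS t 1 = 1 := rfl
        have hS2 : chebS t 2 = t := by norm_num [chebS]
        linear_combination (norm := ring_nf) r1 - chebS t (n + 1) * hS2 + chebS t n * hS1
    | succ m ih =>
        refine ⟨ih.2, fun n => ?_⟩
        have r1 : chebS t ((m + n + 1) + 2) = t * chebS t ((m + n + 1) + 1) - chebS t (m + n + 1) :=
          chebS_rec t (m + n + 1)
        have r2 : chebS t ((m + 1) + 2) = t * chebS t ((m + 1) + 1) - chebS t (m + 1) :=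
          chebS_rec t (m + 1)
        have r3 : chebS t (m + 2) = t * chebS t (m + 1) - chebS t m := chebS_rec t m
        have e1 := ih.1 n
        have e2 := ih.2 n
        linear_combination (norm := ring_nf) r1 + t * e2 - e1 - chebS t (n + 1) * r2 +
          chebS t n * r3
  exact fun m => (key m).1

lemma cheb_catalan (t : ℝ) (s k : ℕ) :
    chebS t k * chebS t (k + 2 * s) - chebS t (k + s) ^ 2 = -chebS t s ^ 2 := by
  cases s with
  | zero => simp [chebS]; ring
  | succ s =>
      have h1 : chebS t (k + 2 * (s + 1)) = chebS t ((k + s + 1) + s + 1) := by ring_nf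
      have h2 := cheb_shift t (k + s + 1) s
      have h3 := cheb_shift t k s
      have h4 : chebS t (k + (s + 1)) = chebS t (k + s + 1) := by ring_nf
      have h5 := cheb_docagne t (s + 1) k
      have h6 : chebS t (k + (s + 1) + 1) = chebS t (k + s + 1 + 1) := by ring_nf
      have h7 : chebS t (k + (s + 1)) = chebS t (k + s + 1) := by ring_nf
      rw [h6, h7] at h5
      rw [h1, h4, h2]
      linear_combination (- chebS t (k + s + 1)) * h3 + chebS t (s + 1) * h5

lemma cheb_lucas_even (t : ℝ) : ∀ s : ℕ,
    chebL t (2 * s) = (t ^ 2 - 4) * chebS t s ^ 2 + 2 ∧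
    chebL t (2 * s + 1) = (t ^ 2 - 4) * chebS t s * chebS t (s + 1) + t := by
  intro s
  induction s with
  | zero => constructor <;> simp [chebS, chebL]
  | succ s ih =>
      have hA : chebL t (2 * (s + 1)) = (t ^ 2 - 4) * chebS t (s + 1) ^ 2 + 2 := by
        have h1 : chebL t (2 * (s + 1)) = chebL t ((2 * s) + 2) := by ring_nf
        rw [h1, chebL_rec]
        linear_combination t * ih.2 - ih.1 - (t ^ 2 - 4) * cheb_cassini t s
      refine ⟨hA, ?_⟩
      have h1 : chebL t (2 * (s + 1) + 1) = chebL t ((2 * s + 1) + 2) := by ring_nf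
      have h2 : chebL t (2 * s + 1 + 1) = chebL t (2 * (s + 1)) := by ring_nf
      rw [h1, chebL_rec, h2, hA, chebS_rec]
      linear_combination (-1 : ℝ) * ih.2

theorem biperiodic_fib_catalan_even_n_lucas_form (a b : ℝ)
    (q : ℤ → ℝ) (hq0 : q 0 = 0) (hq1 : q 1 = 1)
    (hqe : ∀ n : ℤ, Even n → q n = a * q (n - 1) + q (n - 2))
    (hqo : ∀ n : ℤ, Odd n → q n = b * q (n - 1) + q (n - 2))
    (l : ℤ → ℝ) (hl0 : l 0 = 2) (hl1 : l 1 = a)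
    (hle : ∀ n : ℤ, Even n → l n = b * l (n - 1) + l (n - 2))
    (hlo : ∀ n : ℤ, Odd n → l n = a * l (n - 1) + l (n - 2)) :
    ∀ n r : ℕ, Even r → Even n → r ≤ n →
      a * b * (a * b + 4) * (q ((n : ℤ) - r) * q ((n : ℤ) + r) - (q (n : ℤ)) ^ 2) =
        a ^ 2 * (2 - l (2 * r)) := by
  set t : ℝ := a * b + 2 with ht
  -- two-step recurrences
  have hq2 : ∀ n : ℤ, Even n → q (n + 2) = t * q n - q (n - 2) := by
    intro n hn
    have e1 := hqe (n + 2) (by exact hn.add (by decide))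
    rw [show n + 2 - 1 = n + 1 by ring, show n + 2 - 2 = n by ring] at e1
    have e2 := hqo (n + 1) (Even.add_one hn)
    rw [show n + 1 - 1 = n by ring, show n + 1 - 2 = n - 1 by ring] at e2
    have e3 := hqe n hn
    rw [ht]
    linear_combination e1 + a * e2 - e3
  have hl2 : ∀ n : ℤ, Even n → l (n + 2) = t * l n - l (n - 2) := by
    intro n hn
    have e1 := hle (n + 2) (by exact hn.add (by decide))
    rw [show n + 2 - 1 = n + 1 by ring, show n + 2 - 2 = n by ring] at e1
    have e2 := hlo (n + 1) (Even.add_one hn)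
    rw [show n + 1 - 1 = n by ring, show n + 1 - 2 = n - 1 by ring] at e2
    have e3 := hle n hn
    rw [ht]
    linear_combination e1 + b * e2 - e3
  have hq2' : q 2 = a := by
    have := hqe 2 (by decide)
    simpa [hq0, hq1] using this
  have hl2' : l 2 = t := by
    have := hle 2 (by decide)
    rw [show (2:ℤ) - 1 = 1 by ring, show (2:ℤ) - 2 = 0 by ring, hl0, hl1] at this
    rw [this, ht]; ring
  -- identification with Chebyshev sequences
  have qeven : ∀ k : ℕ, q (2 * (k : ℤ)) = a * chebS t k ∧
      q (2 * ((k : ℤ) + 1)) = a * chebS t (k + 1) := by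
    intro k
    induction k with
    | zero =>
        constructor
        · simpa [chebS] using hq0
        · have : (2 * (((0:ℕ):ℤ) + 1)) = 2 := by norm_num
          rw [this, hq2']
          norm_num [chebS]
    | succ k ih =>
        refine ⟨by push_cast; exact ih.2, ?_⟩
        have h := hq2 (2 * ((k : ℤ) + 1)) ⟨(k:ℤ)+1, by ring⟩
        rw [show 2 * ((k:ℤ) + 1) - 2 = 2 * (k:ℤ) by ring] at h
        push_cast
        rw [show 2 * ((k:ℤ) + 1 + 1) = 2 * ((k:ℤ) + 1) + 2 by ring, h, ih.1, ih.2,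
            show chebS t (k + 1 + 1) = t * chebS t (k + 1) - chebS t k from chebS_rec t k]
        ring
  have leven : ∀ k : ℕ, l (2 * (k : ℤ)) = chebL t k ∧
      l (2 * ((k : ℤ) + 1)) = chebL t (k + 1) := by
    intro k
    induction k with
    | zero =>
        constructor
        · simpa [chebL] using hl0
        · have : (2 * (((0:ℕ):ℤ) + 1)) = 2 := by norm_num
          rw [this, hl2']
          norm_num [chebL]
    | succ k ih =>
        refine ⟨by push_cast; exact ih.2, ?_⟩
        have h := hl2 (2 * ((k : ℤ) + 1)) ⟨(k:ℤ)+1, by ring⟩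
        rw [show 2 * ((k:ℤ) + 1) - 2 = 2 * (k:ℤ) by ring] at h
        push_cast
        rw [show 2 * ((k:ℤ) + 1 + 1) = 2 * ((k:ℤ) + 1) + 2 by ring, h, ih.1, ih.2,
            show chebL t (k + 1 + 1) = t * chebL t (k + 1) - chebL t k from chebL_rec t k]
  -- main computation
  intro n r hr hn hrn
  obtain ⟨s, hs⟩ := hr
  obtain ⟨m, hm⟩ := hn
  have hsm : s ≤ m := by omega
  have e1 : (n : ℤ) - r = 2 * ((m - s : ℕ) : ℤ) := by
    have : ((m - s : ℕ) : ℤ) = (m : ℤ) - s := by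
      push_cast [Nat.cast_sub hsm]; ring
    rw [this]; push_cast [hs, hm]; ring
  have e2 : (n : ℤ) + r = 2 * ((m + s : ℕ) : ℤ) := by push_cast [hs, hm]; ring
  have e3 : (n : ℤ) = 2 * ((m : ℕ) : ℤ) := by push_cast [hm]; ring
  have e4 : (2 * (r : ℤ)) = 2 * ((2 * s : ℕ) : ℤ) := by push_cast [hs]; ring
  rw [e1, e2, e3, e4, (qeven (m - s)).1, (qeven (m + s)).1, (qeven m).1,
      (leven (2 * s)).1, (cheb_lucas_even t s).1]
  have hc := cheb_catalan t s (m - s)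
  rw [show m - s + 2 * s = m + s by omega, show m - s + s = m by omega] at hc
  rw [ht] at hc ⊢
  linear_combination (a ^ 2 * a * b * (a * b + 4)) * hc
end

section
/- For all real numbers a, b and all natural numbers n and even natural numbers r with n odd and n ≥ r, the bi-periodic Fibonacci and Lucas numbers satisfy (a*b + 4) * (q (n−r) * q (n+r) − (q n)²) = l (2r) − 2. (This is the denominator-free Lucas-number form of the odd-n case of the paper's Catalan-type theorem for even r, valid for all real a, b.) -/
/-!
On each parity class both `q` and `l` obey `x (m + 2) = (a * b + 2) * x m - x (m - 2)`, so
`i ↦ q (2 * i + 1)` and `i ↦ l (2 * i)` are Lucas sequences with `P = t := a * b + 2`, `Q = 1`.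
For such a sequence the Catalan defect `x (m - k) * x (m + k) - x m ^ 2` is the Cassini constant
times `S_{k-1}(t) ^ 2`, with `S` the Chebyshev polynomials normalised by
`S_{k+1} = X S_k - S_{k-1}`; for `q (2 * i + 1)` that constant is `a * b`. On the other side
`l (2 * i) = C_i(t)` (Vieta–Lucas polynomials), and `C_{2j}(t) - 2 = (t ^ 2 - 4) * S_{j-1}(t) ^ 2`
with `t ^ 2 - 4 = a * b * (a * b + 4)`.
-/

open Polynomial

/-- Solutions of the Lucas recurrence with parameters `P = t`, `Q = 1`. -/
def IsLucasSeq {R : Type*} [CommRing R] (t : R) (x : ℤ → R) : Prop :=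
  ∀ m, x (m + 1) = t * x m - x (m - 1)

theorem isLucasSeq_eval_S {R : Type*} [CommRing R] (t : R) (c : ℤ) :
    IsLucasSeq t (fun k => (Chebyshev.S R (k + c)).eval t) := fun m => by
  simpa [add_right_comm, sub_add_eq_add_sub] using
    congrArg (eval t) (Chebyshev.S_add_one R (m + c))

theorem isLucasSeq_eval_C {R : Type*} [CommRing R] (t : R) :
    IsLucasSeq t (fun k => (Chebyshev.C R k).eval t) := fun m => by
  simpa using congrArg (eval t) (Chebyshev.C_add_one R m)

namespace IsLucasSeq

variable {R : Type*} [CommRing R] {t : R} {x y : ℤ → R}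

theorem ext (hx : IsLucasSeq t x) (hy : IsLucasSeq t y) (h0 : x 0 = y 0) (h1 : x 1 = y 1) :
    x = y := by
  have key : ∀ m, x m = y m ∧ x (m + 1) = y (m + 1) := fun m => by
    induction m using Int.induction_on with
    | zero => exact ⟨h0, h1⟩
    | succ i ih =>
      refine ⟨ih.2, ?_⟩
      rw [hx, hy, add_sub_cancel_right, ih.1, ih.2]
    | pred i ih =>
      refine ⟨?_, by rw [sub_add_cancel]; exact ih.1⟩
      have hx' := hx (-i); have hy' := hy (-i)
      rw [ih.1, ih.2] at hx'
      linear_combination hx' - hy'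
  exact funext fun m => (key m).1

theorem shift (hx : IsLucasSeq t x) (c : ℤ) : IsLucasSeq t (fun k => x (c + k)) := fun m => by
  simpa only [add_assoc, add_sub_assoc] using hx (c + m)

theorem reflect (hx : IsLucasSeq t x) (c : ℤ) : IsLucasSeq t (fun k => x (c - k)) := fun m => by
  have h := hx (c - m)
  rw [sub_add, sub_sub] at h
  linear_combination h

theorem sub (hx : IsLucasSeq t x) (hy : IsLucasSeq t y) : IsLucasSeq t (x - y) := fun m => by
  simp only [Pi.sub_apply, hx m, hy m]; ring

theorem const_mul (hx : IsLucasSeq t x) (c : R) : IsLucasSeq t (fun k => c * x k) := fun m => by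
  simp only [hx m]; ring

theorem add_eq (hx : IsLucasSeq t x) (m k : ℤ) :
    x (m + k) =
      x (m + 1) * (Chebyshev.S R (k - 1)).eval t - x m * (Chebyshev.S R (k - 2)).eval t := by
  have hrhs := ((isLucasSeq_eval_S t (-1)).const_mul (x (m + 1))).sub
    ((isLucasSeq_eval_S t (-2)).const_mul (x m))
  have := congrFun ((hx.shift m).ext hrhs (by simp) (by simp)) k
  simpa [sub_eq_add_neg] using this

theorem sub_eq (hx : IsLucasSeq t x) (m k : ℤ) :
    x (m - k) =
      x (m - 1) * (Chebyshev.S R (k - 1)).eval t - x m * (Chebyshev.S R (k - 2)).eval t := by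
  simpa using (hx.reflect m).add_eq 0 k

theorem cassini_eq (hx : IsLucasSeq t x) (m : ℤ) :
    x (m - 1) * x (m + 1) - x m ^ 2 = x (-1) * x 1 - x 0 ^ 2 := by
  have step : ∀ m, x m * x (m + 2) - x (m + 1) ^ 2 = x (m - 1) * x (m + 1) - x m ^ 2 :=
    fun m => by
      rw [show m + 2 = m + 1 + 1 by ring, hx (m + 1), hx m, add_sub_cancel_right]; ring
  induction m using Int.induction_on with
  | zero => simp
  | succ i ih => rw [add_sub_cancel_right, add_assoc, one_add_one_eq_two, step, ih]
  | pred i ih => rw [← step, sub_add_cancel, show -(i : ℤ) - 1 + 2 = -i + 1 by ring, ih]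

theorem catalan (hx : IsLucasSeq t x) (m k : ℤ) :
    x (m - k) * x (m + k) - x m ^ 2 =
      (x (m - 1) * x (m + 1) - x m ^ 2) * (Chebyshev.S R (k - 1)).eval t ^ 2 := by
  have hS := congrArg (eval t) (Chebyshev.S_sq_add_S_sq R (k - 2))
  simp only [eval_sub, eval_add, eval_pow, eval_mul, eval_X, eval_one,
    show k - 2 + 1 = k - 1 by ring] at hS
  rw [hx.sub_eq, hx.add_eq, hx m]
  linear_combination (x m) ^ 2 * hS

end IsLucasSeq

theorem eval_C_two_mul_sub_two {R : Type*} [CommRing R] (t : R) (k : ℤ) :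
    (Chebyshev.C R (2 * k)).eval t - 2 = (t ^ 2 - 4) * (Chebyshev.S R (k - 1)).eval t ^ 2 := by
  have hC := (isLucasSeq_eval_C t).catalan 0 k
  simp only [zero_sub, zero_add, Chebyshev.C_neg, Chebyshev.C_zero, Chebyshev.C_one, eval_ofNat,
    eval_X] at hC
  have hsq := congrArg (eval t) (Chebyshev.C_mul_C R k k)
  simp only [eval_mul, eval_add, sub_self, Chebyshev.C_zero, eval_ofNat, ← two_mul] at hsq
  linear_combination hC - hsq

theorem isLucasSeq_of_biperiodic {R : Type*} [CommRing R] {α β : R} {f : ℤ → R}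
    (he : ∀ n : ℤ, Even n → f n = α * f (n - 1) + f (n - 2))
    (ho : ∀ n : ℤ, Odd n → f n = β * f (n - 1) + f (n - 2)) (c : ℤ) :
    IsLucasSeq (α * β + 2) (fun k => f (2 * k + c)) := by
  have step : ∀ m, f (m + 2) = (α * β + 2) * f m - f (m - 2) := fun m => by
    rcases Int.even_or_odd m with hm | hm
    · have h2 := he (m + 2) (hm.add even_two)
      have h1 := ho (m + 1) hm.add_one
      have h0 := he m hm
      ring_nf at h2 h1 h0 ⊢
      linear_combination h2 + α * h1 - h0
    · have h2 := ho (m + 2) (hm.add_even even_two)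
      have h1 := he (m + 1) hm.add_one
      have h0 := ho m hm
      ring_nf at h2 h1 h0 ⊢
      linear_combination h2 + β * h1 - h0
  intro m
  have := step (2 * m + c)
  ring_nf at this ⊢
  linear_combination this

theorem biperiodic_fib_catalan_odd_n_lucas_form (a b : ℝ)
    (q : ℤ → ℝ) (hq0 : q 0 = 0) (hq1 : q 1 = 1)
    (hqe : ∀ n : ℤ, Even n → q n = a * q (n - 1) + q (n - 2))
    (hqo : ∀ n : ℤ, Odd n → q n = b * q (n - 1) + q (n - 2))
    (l : ℤ → ℝ) (hl0 : l 0 = 2) (hl1 : l 1 = a)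
    (hle : ∀ n : ℤ, Even n → l n = b * l (n - 1) + l (n - 2))
    (hlo : ∀ n : ℤ, Odd n → l n = a * l (n - 1) + l (n - 2)) :
    ∀ n r : ℕ, Even r → Odd n → r ≤ n →
      (a * b + 4) * (q ((n : ℤ) - r) * q ((n : ℤ) + r) - (q (n : ℤ)) ^ 2) =
        l (2 * r) - 2 := by
  rintro n r ⟨j, rfl⟩ ⟨k, rfl⟩ -
  set t := a * b + 2
  have hP : IsLucasSeq t (fun i => q (2 * i + 1)) := isLucasSeq_of_biperiodic hqe hqo 1
  have hL : IsLucasSeq t (fun i => l (2 * i)) := by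
    simpa only [t, mul_comm b a, add_zero] using isLucasSeq_of_biperiodic hle hlo 0
  have hcassini : q (2 * -1 + 1) * q (2 * 1 + 1) - q (2 * 0 + 1) ^ 2 = a * b := by
    have h1 := hqo 1 odd_one
    have h2 := hqe 2 even_two
    have h3 := hqo 3 (by decide)
    norm_num [hq0, hq1] at h1 h2 h3 ⊢
    rw [h3, h2, ← h1]; ring
  have hl2 : l 2 = t := by
    have := hle 2 even_two
    norm_num [hl0, hl1] at this
    rw [this]; ring
  have hL_eq : (fun i => l (2 * i)) = fun i => (Chebyshev.C ℝ i).eval t :=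
    hL.ext (isLucasSeq_eval_C t) (by simp [hl0]) (by simp [hl2])
  calc (a * b + 4) * (q (((2 * k + 1 : ℕ) : ℤ) - (j + j : ℕ))
        * q (((2 * k + 1 : ℕ) : ℤ) + (j + j : ℕ)) - q ((2 * k + 1 : ℕ) : ℤ) ^ 2)
      = (a * b + 4) * (q (2 * (k - (j : ℤ)) + 1) * q (2 * (k + (j : ℤ)) + 1)
        - q (2 * k + 1) ^ 2) := by push_cast; ring_nf
    _ = (a * b + 4) * ((q (2 * -1 + 1) * q (2 * 1 + 1) - q (2 * 0 + 1) ^ 2)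
        * (Chebyshev.S ℝ (j - 1)).eval t ^ 2) := by
      rw [hP.catalan, hP.cassini_eq]
    _ = (t ^ 2 - 4) * (Chebyshev.S ℝ (j - 1)).eval t ^ 2 := by rw [hcassini]; ring
    _ = l (2 * ((j + j : ℕ) : ℤ)) - 2 := by
      rw [← eval_C_two_mul_sub_two, ← congrFun hL_eq]; push_cast; ring_nf
end

section
/- For all nonzero real numbers a, b and every natural number n, the bi-periodic Fibonacci numbers satisfy the summation formula ∑_{r=0}^{n−1} q r = (q (n+1) + q n − q (n−1) − q (n−2)) / (a*b) − 1/b. (This is the scalar component of the paper's summation theorem, part (i).) -/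
/-!
Two consecutive steps of the recurrence, one with each coefficient, eliminate the neighbours
`q (n ± 1)`: `q (n + 2) - 2 q n + q (n - 2) = a b q n` for every integer `n`, whatever its parity.
Hence `S n := q (n + 1) + q n - q (n - 1) - q (n - 2)` satisfies `S (n + 1) - S n = a b q n`,
the sum telescopes to `a b ∑_{r < n} q r = S n - S 0`, and the initial values give `S 0 = a`.
-/

open Finset

lemma second_difference_eq_of_alternating_steps {R : Type*} [CommRing R] {c d x₀ x₁ x₂ x₃ x₄ : R}
    (h₂ : x₂ = c * x₁ + x₀) (h₃ : x₃ = d * x₂ + x₁) (h₄ : x₄ = c * x₃ + x₂) :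
    x₄ - 2 * x₂ + x₀ = c * d * x₂ := by
  linear_combination h₄ + c * h₃ - h₂

namespace BiperiodicFib

variable {a b : ℝ} {q : ℤ → ℝ}

lemma second_difference_eq
    (hqe : ∀ n : ℤ, Even n → q n = a * q (n - 1) + q (n - 2))
    (hqo : ∀ n : ℤ, Odd n → q n = b * q (n - 1) + q (n - 2)) (n : ℤ) :
    q (n + 2) - 2 * q n + q (n - 2) = a * b * q n := by
  have h₁ : n + 1 - 1 = n := by ring
  have h₂ : n + 1 - 2 = n - 1 := by ring
  have h₃ : n + 2 - 1 = n + 1 := by ring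
  have h₄ : n + 2 - 2 = n := by ring
  rcases Int.even_or_odd n with hn | hn
  · refine second_difference_eq_of_alternating_steps (x₃ := q (n + 1)) (hqe n hn) ?_ ?_
    · simpa only [h₁, h₂] using hqo (n + 1) hn.add_one
    · simpa only [h₃, h₄] using hqe (n + 2) (even_add_two.mpr hn)
  · rw [mul_comm a]
    refine second_difference_eq_of_alternating_steps (x₃ := q (n + 1)) (hqo n hn) ?_ ?_
    · simpa only [h₁, h₂] using hqe (n + 1) hn.add_one
    · simpa only [h₃, h₄] using hqo (n + 2) (hn.add_even even_two)

/-- Up to the factor `a * b`, an antidifference of `q`. -/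
def antidiff (q : ℤ → ℝ) (n : ℤ) : ℝ :=
  q (n + 1) + q n - q (n - 1) - q (n - 2)

lemma antidiff_add_one_sub
    (hqe : ∀ n : ℤ, Even n → q n = a * q (n - 1) + q (n - 2))
    (hqo : ∀ n : ℤ, Odd n → q n = b * q (n - 1) + q (n - 2)) (n : ℤ) :
    antidiff q (n + 1) - antidiff q n = a * b * q n := by
  rw [← second_difference_eq hqe hqo n, antidiff, antidiff]
  ring_nf

lemma mul_sum_range_eq
    (hqe : ∀ n : ℤ, Even n → q n = a * q (n - 1) + q (n - 2))
    (hqo : ∀ n : ℤ, Odd n → q n = b * q (n - 1) + q (n - 2)) (n : ℕ) :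
    a * b * ∑ r ∈ range n, q r = antidiff q n - antidiff q 0 := by
  rw [mul_sum, ← Nat.cast_zero, ← sum_range_sub (fun m : ℕ => antidiff q m)]
  refine sum_congr rfl fun r _ => ?_
  rw [Nat.cast_succ, antidiff_add_one_sub hqe hqo]

lemma antidiff_zero (hq0 : q 0 = 0) (hq1 : q 1 = 1)
    (hqe : ∀ n : ℤ, Even n → q n = a * q (n - 1) + q (n - 2))
    (hqo : ∀ n : ℤ, Odd n → q n = b * q (n - 1) + q (n - 2)) :
    antidiff q 0 = a := by
  have hq_neg_one : q (-1) = 1 := by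
    have h := hqo 1 odd_one
    norm_num [hq0, hq1] at h
    linarith
  have hq_neg_two : q (-2) = -a := by
    have h := hqe 0 Even.zero
    norm_num [hq0, hq_neg_one] at h
    linarith
  norm_num [antidiff, hq0, hq1, hq_neg_one, hq_neg_two]

end BiperiodicFib

open BiperiodicFib in
theorem biperiodic_fib_sum (a b : ℝ) (ha : a ≠ 0) (hb : b ≠ 0)
    (q : ℤ → ℝ) (hq0 : q 0 = 0) (hq1 : q 1 = 1)
    (hqe : ∀ n : ℤ, Even n → q n = a * q (n - 1) + q (n - 2))
    (hqo : ∀ n : ℤ, Odd n → q n = b * q (n - 1) + q (n - 2)) :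
    ∀ n : ℕ, ∑ r ∈ Finset.range n, q r =
      (q ((n : ℤ) + 1) + q (n : ℤ) - q ((n : ℤ) - 1) - q ((n : ℤ) - 2)) / (a * b)
        - 1 / b := by
  intro n
  have h := mul_sum_range_eq hqe hqo n
  rw [antidiff_zero hq0 hq1 hqe hqo, antidiff] at h
  field_simp
  linear_combination h
end

section
/- For all nonzero real numbers a, b and every natural number n, the even-indexed bi-periodic Fibonacci numbers satisfy the summation formula ∑_{r=0}^{n−1} q (2r) = (q (2n) − q (2n−2)) / (a*b) − 1/b. (This is the scalar component of the paper's summation theorem, part (ii).) -/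
/-!
Eliminating the odd-indexed terms from the recurrence gives the second-order relation
`a b q(2k) = (q(2k+2) - q(2k)) - (q(2k) - q(2k-2))` among even-indexed terms, so `a b` times the
sum telescopes to `q(2n) - q(2n-2) - (q 0 - q(-2))`, and running the recurrence backwards gives
`q(-2) = -a`.
-/

namespace BiperiodicFib

variable {a b : ℝ} {q : ℤ → ℝ}
  (hqe : ∀ n : ℤ, Even n → q n = a * q (n - 1) + q (n - 2))
  (hqo : ∀ n : ℤ, Odd n → q n = b * q (n - 1) + q (n - 2))
include hqe hqo

theorem mul_mul_even_eq_sub_sub (k : ℤ) :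
    a * b * q (2 * k) = (q (2 * k + 2) - q (2 * k)) - (q (2 * k) - q (2 * k - 2)) := by
  have e₂ := hqe (2 * k + 2) ⟨k + 1, by ring⟩
  have e₁ := hqo (2 * k + 1) ⟨k, by ring⟩
  have e₀ := hqe (2 * k) ⟨k, by ring⟩
  rw [show 2 * k + 2 - 1 = 2 * k + 1 by ring, show 2 * k + 2 - 2 = 2 * k by ring] at e₂
  rw [show 2 * k + 1 - 1 = 2 * k by ring, show 2 * k + 1 - 2 = 2 * k - 1 by ring] at e₁
  rw [e₂, e₁, e₀]
  ring

theorem apply_neg_two (hq0 : q 0 = 0) (hq1 : q 1 = 1) : q (-2) = -a := by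
  have e₁ := hqo 1 odd_one
  have e₀ := hqe 0 .zero
  norm_num [hq0, hq1] at e₁ e₀
  rw [← e₁] at e₀
  linarith

theorem mul_mul_sum_range_even (n : ℕ) :
    a * b * ∑ r ∈ Finset.range n, q (2 * r) =
      (q (2 * (n : ℤ)) - q (2 * (n : ℤ) - 2)) - (q 0 - q (-2)) := by
  rw [Finset.mul_sum]
  have := Finset.sum_range_sub (fun r : ℕ => q (2 * (r : ℤ)) - q (2 * (r : ℤ) - 2)) n
  simp only [Nat.cast_zero, mul_zero, zero_sub] at this
  rw [← this]
  refine Finset.sum_congr rfl fun r _ => ?_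
  rw [mul_mul_even_eq_sub_sub hqe hqo]
  push_cast
  ring_nf

end BiperiodicFib

theorem biperiodic_fib_sum_even (a b : ℝ) (ha : a ≠ 0) (hb : b ≠ 0)
    (q : ℤ → ℝ) (hq0 : q 0 = 0) (hq1 : q 1 = 1)
    (hqe : ∀ n : ℤ, Even n → q n = a * q (n - 1) + q (n - 2))
    (hqo : ∀ n : ℤ, Odd n → q n = b * q (n - 1) + q (n - 2)) :
    ∀ n : ℕ, ∑ r ∈ Finset.range n, q (2 * r) =
      (q (2 * (n : ℤ)) - q (2 * (n : ℤ) - 2)) / (a * b) - 1 / b := by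
  intro n
  have hsum := BiperiodicFib.mul_mul_sum_range_even hqe hqo n
  rw [hq0, BiperiodicFib.apply_neg_two hqe hqo hq0 hq1] at hsum
  field_simp
  linarith
end

section
/- For all nonzero real numbers a, b and every natural number n, the odd-indexed bi-periodic Fibonacci numbers satisfy the summation formula ∑_{r=0}^{n−1} q (2r+1) = (q (2n+1) − q (2n−1)) / (a*b). (This is the scalar component of the paper's summation theorem, part (iii).) -/
/-! The differences `d n = q (2n+1) - q (2n-1)` equal `b * q (2n)`, so the even-index recurrence
gives `d (n+1) - d n = a * b * q (2n+1)`: the sum telescopes, with `d 0 = b * q 0 = 0`. -/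

section BiperiodicFib

variable {R : Type*} [CommRing R] {a b : R} {q : ℤ → R}

theorem biperiodicFib_odd_sub_odd (hqo : ∀ n : ℤ, Odd n → q n = b * q (n - 1) + q (n - 2))
    (n : ℤ) : q (2 * n + 1) - q (2 * n - 1) = b * q (2 * n) := by
  have h := hqo (2 * n + 1) (odd_two_mul_add_one n)
  rw [add_sub_cancel_right, show 2 * n + 1 - 2 = 2 * n - 1 by ring] at h
  rw [h, add_sub_cancel_right]

theorem biperiodicFib_odd_sub_odd_succ_sub
    (hqe : ∀ n : ℤ, Even n → q n = a * q (n - 1) + q (n - 2))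
    (hqo : ∀ n : ℤ, Odd n → q n = b * q (n - 1) + q (n - 2)) (n : ℤ) :
    (q (2 * (n + 1) + 1) - q (2 * (n + 1) - 1)) - (q (2 * n + 1) - q (2 * n - 1)) =
      a * b * q (2 * n + 1) := by
  have h := hqe (2 * (n + 1)) (even_two_mul (n + 1))
  rw [show 2 * (n + 1) - 1 = 2 * n + 1 by ring, show 2 * (n + 1) - 2 = 2 * n by ring] at h
  rw [biperiodicFib_odd_sub_odd hqo, biperiodicFib_odd_sub_odd hqo, h]
  ring

theorem mul_sum_biperiodicFib_odd (hq0 : q 0 = 0)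
    (hqe : ∀ n : ℤ, Even n → q n = a * q (n - 1) + q (n - 2))
    (hqo : ∀ n : ℤ, Odd n → q n = b * q (n - 1) + q (n - 2)) (n : ℕ) :
    a * b * ∑ r ∈ Finset.range n, q (2 * r + 1) = q (2 * (n : ℤ) + 1) - q (2 * (n : ℤ) - 1) := by
  let d : ℕ → R := fun m => q (2 * (m : ℤ) + 1) - q (2 * (m : ℤ) - 1)
  have hd0 : d 0 = 0 := by
    simpa [d, hq0] using biperiodicFib_odd_sub_odd hqo 0
  calc a * b * ∑ r ∈ Finset.range n, q (2 * r + 1)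
      = ∑ r ∈ Finset.range n, (d (r + 1) - d r) := by
        rw [Finset.mul_sum]
        refine Finset.sum_congr rfl fun r _ => ?_
        simp only [d, Nat.cast_succ, biperiodicFib_odd_sub_odd_succ_sub hqe hqo]
    _ = d n := by rw [Finset.sum_range_sub, hd0, sub_zero]

end BiperiodicFib

theorem biperiodic_fib_sum_odd_general (a b : ℝ) (ha : a ≠ 0) (hb : b ≠ 0)
    (q : ℤ → ℝ) (hq0 : q 0 = 0)
    (hqe : ∀ n : ℤ, Even n → q n = a * q (n - 1) + q (n - 2))
    (hqo : ∀ n : ℤ, Odd n → q n = b * q (n - 1) + q (n - 2)) :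
    ∀ n : ℕ, ∑ r ∈ Finset.range n, q (2 * r + 1) =
      (q (2 * (n : ℤ) + 1) - q (2 * (n : ℤ) - 1)) / (a * b) := fun n =>
  eq_div_of_mul_eq (mul_ne_zero ha hb) <| by
    rw [mul_comm]
    exact mul_sum_biperiodicFib_odd hq0 hqe hqo n

theorem biperiodic_fib_sum_odd (a b : ℝ) (ha : a ≠ 0) (hb : b ≠ 0)
    (q : ℤ → ℝ) (hq0 : q 0 = 0) (hq1 : q 1 = 1)
    (hqe : ∀ n : ℤ, Even n → q n = a * q (n - 1) + q (n - 2))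
    (hqo : ∀ n : ℤ, Odd n → q n = b * q (n - 1) + q (n - 2)) :
    ∀ n : ℕ, ∑ r ∈ Finset.range n, q (2 * r + 1) =
      (q (2 * (n : ℤ) + 1) - q (2 * (n : ℤ) - 1)) / (a * b) :=
  biperiodic_fib_sum_odd_general a b ha hb q hq0 hqe hqo
end

section
/- For all real numbers a, b, every even integer n, and every integer s, the bi-periodic Fibonacci and Lucas numbers satisfy q (n+s) + (−1)^(s−1) * q (n−s) = l n * q s. (This identity is the componentwise content of part (v) of the paper's Proposition: for even n, O_n + O_{−n} = l_n · O_0 holds coefficientwise.) -/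
/-!
Both sides of the identity, as functions of `s`, solve the bi-periodic recurrence of `q`: the
right side trivially, `q (n + s)` because the shift `n` is even, and `(-1) ^ (s - 1) * q (n - s)`
because reflecting an index about an even `n` preserves parity while the sign makes up for the
reversed direction. A solution is fixed by its values at `0` and `1`, where the identity reduces to
`q 0 = 0` and to the Lucas relation `q (n + 1) + q (n - 1) = l n`; the latter holds for the same
reason, as `m ↦ q (m + 1) + q (m - 1)` solves the recurrence of `l`, which is that of `q` with
`a` and `b` exchanged.
-/

section BiperiodicSolutions

variable {R : Type*} [CommRing R]

def biperiodicSolutions (a b : R) : Submodule R (ℤ → R) where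
  carrier := {f | (∀ n, Even n → f n = a * f (n - 1) + f (n - 2)) ∧
    ∀ n, Odd n → f n = b * f (n - 1) + f (n - 2)}
  zero_mem' := ⟨fun _ _ => by simp, fun _ _ => by simp⟩
  add_mem' := by
    rintro f g ⟨hfe, hfo⟩ ⟨hge, hgo⟩
    refine ⟨fun n hn => ?_, fun n hn => ?_⟩
    · simp only [Pi.add_apply, hfe n hn, hge n hn]; ring
    · simp only [Pi.add_apply, hfo n hn, hgo n hn]; ring
  smul_mem' := by
    rintro c f ⟨hfe, hfo⟩
    refine ⟨fun n hn => ?_, fun n hn => ?_⟩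
    · simp only [Pi.smul_apply, smul_eq_mul, hfe n hn]; ring
    · simp only [Pi.smul_apply, smul_eq_mul, hfo n hn]; ring

variable {a b : R} {f g : ℤ → R}

lemma biperiodicSolutions.exists_step (hf : f ∈ biperiodicSolutions a b) (n : ℤ) :
    ∃ c, f (n + 2) = c * f (n + 1) + f n := by
  have h₁ : n + 2 - 1 = n + 1 := by ring
  have h₂ : n + 2 - 2 = n := by ring
  rcases Int.even_or_odd (n + 2) with hn | hn
  · exact ⟨a, by rw [hf.1 _ hn, h₁, h₂]⟩
  · exact ⟨b, by rw [hf.2 _ hn, h₁, h₂]⟩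

lemma biperiodicSolutions.eq_zero (hf : f ∈ biperiodicSolutions a b) (h0 : f 0 = 0)
    (h1 : f 1 = 0) : f = 0 := by
  suffices h : ∀ n, f n = 0 ∧ f (n + 1) = 0 from funext fun n => (h n).1
  intro n
  induction n using Int.induction_on with
  | zero => exact ⟨h0, h1⟩
  | succ k ih =>
    obtain ⟨c, hc⟩ := biperiodicSolutions.exists_step hf k
    refine ⟨ih.2, ?_⟩
    rw [add_assoc, one_add_one_eq_two, hc, ih.1, ih.2]
    ring
  | pred k ih =>
    obtain ⟨c, hc⟩ := biperiodicSolutions.exists_step hf (-k - 1)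
    have h₁ : -(k : ℤ) - 1 + 1 = -k := by ring
    have h₂ : -(k : ℤ) - 1 + 2 = -k + 1 := by ring
    rw [h₁, h₂, ih.1, ih.2] at hc
    exact ⟨by linear_combination -hc, by rw [h₁, ih.1]⟩

lemma biperiodicSolutions.eq_of_eq_zero_one (hf : f ∈ biperiodicSolutions a b)
    (hg : g ∈ biperiodicSolutions a b) (h0 : f 0 = g 0) (h1 : f 1 = g 1) : f = g :=
  sub_eq_zero.mp <| eq_zero (sub_mem hf hg) (sub_eq_zero.mpr h0) (sub_eq_zero.mpr h1)

lemma biperiodicSolutions.comp_add_even (hf : f ∈ biperiodicSolutions a b) {k : ℤ}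
    (hk : Even k) : (fun m => f (m + k)) ∈ biperiodicSolutions a b := by
  refine ⟨fun n hn => ?_, fun n hn => ?_⟩ <;> dsimp only
  · rw [hf.1 _ (hn.add hk)]; ring_nf
  · rw [hf.2 _ (hn.add_even hk)]; ring_nf

lemma biperiodicSolutions.comp_add_odd (hf : f ∈ biperiodicSolutions a b) {k : ℤ}
    (hk : Odd k) : (fun m => f (m + k)) ∈ biperiodicSolutions b a := by
  refine ⟨fun n hn => ?_, fun n hn => ?_⟩ <;> dsimp only
  · rw [hf.2 _ (hn.add_odd hk)]; ring_nf
  · rw [hf.1 _ (hn.add_odd hk)]; ring_nf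

end BiperiodicSolutions

lemma biperiodicSolutions.reflect_even {K : Type*} [Field K] {a b : K} {f : ℤ → K}
    (hf : f ∈ biperiodicSolutions a b) {n : ℤ} (hn : Even n) :
    (fun s => (-1 : K) ^ (s - 1) * f (n - s)) ∈ biperiodicSolutions a b := by
  have sign₁ (s : ℤ) : (-1 : K) ^ (s - 1 - 1) = -(-1) ^ (s - 1) := by
    rw [zpow_sub_one₀ (by norm_num)]; ring
  have sign₂ (s : ℤ) : (-1 : K) ^ (s - 2 - 1) = (-1) ^ (s - 1) := by
    rw [show s - 2 - 1 = s - 1 - 1 - 1 by ring, zpow_sub_one₀ (by norm_num), sign₁]; ring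
  have idx₁ (s : ℤ) : n - (s - 1) = n - s + 2 - 1 := by ring
  have idx₂ (s : ℤ) : n - (s - 2) = n - s + 2 := by ring
  refine ⟨fun s hs => ?_, fun s hs => ?_⟩ <;> dsimp only
  · have h := hf.1 (n - s + 2) ((hn.sub hs).add even_two)
    rw [sign₁, sign₂, idx₁, idx₂, h, show n - s + 2 - 2 = n - s by ring]
    ring
  · have h := hf.2 (n - s + 2) ((hn.sub_odd hs).add_even even_two)
    rw [sign₁, sign₂, idx₁, idx₂, h, show n - s + 2 - 2 = n - s by ring]
    ring

theorem biperiodic_fib_add_neg (a b : ℝ)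
    (q : ℤ → ℝ) (hq0 : q 0 = 0) (hq1 : q 1 = 1)
    (hqe : ∀ n : ℤ, Even n → q n = a * q (n - 1) + q (n - 2))
    (hqo : ∀ n : ℤ, Odd n → q n = b * q (n - 1) + q (n - 2))
    (l : ℤ → ℝ) (hl0 : l 0 = 2) (hl1 : l 1 = a)
    (hle : ∀ n : ℤ, Even n → l n = b * l (n - 1) + l (n - 2))
    (hlo : ∀ n : ℤ, Odd n → l n = a * l (n - 1) + l (n - 2)) :
    ∀ n : ℤ, Even n → ∀ s : ℤ,
      q (n + s) + (-1 : ℝ) ^ (s - 1) * q (n - s) = l n * q s := by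
  have hq : q ∈ biperiodicSolutions a b := ⟨hqe, hqo⟩
  have hl : l ∈ biperiodicSolutions b a := ⟨hle, hlo⟩
  have lucas : (fun m => q (m + 1) + q (m + -1)) = l := by
    refine biperiodicSolutions.eq_of_eq_zero_one
      (add_mem (biperiodicSolutions.comp_add_odd hq odd_one) (biperiodicSolutions.comp_add_odd hq odd_one.neg)) hl ?_ ?_
    · have h := hqo 1 odd_one
      norm_num [hq0, hq1] at h
      norm_num [hq1, hl0, ← h]
    · have h := hqe 2 even_two
      norm_num [hq0, hq1] at h
      norm_num [hq0, hl1, h]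
  intro n hn
  have key : (fun s => q (n + s) + (-1 : ℝ) ^ (s - 1) * q (n - s)) = fun s => l n * q s := by
    refine biperiodicSolutions.eq_of_eq_zero_one
      (add_mem (by simpa only [add_comm n] using biperiodicSolutions.comp_add_even hq hn) (biperiodicSolutions.reflect_even hq hn))
      (Submodule.smul_mem _ (l n) hq) ?_ ?_
    · simp [hq0]
    · simpa [sub_eq_add_neg, hq1] using congrFun lucas n
  exact fun s => congrFun key s
end

section
/- For all real numbers a, b and every integer n, the bi-periodic Fibonacci and Lucas numbers satisfy (a*b + 4) * q n = l (n−1) + l (n+1). (This is Equation (9).) -/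
/-!
Both `n ↦ (a b + 4) q n` and `n ↦ l (n - 1) + l (n + 1)` satisfy the recurrence of `q`: it is
linear, and shifting the index by an odd amount exchanges the roles of `a` and `b`, which turns the
recurrence of `l` into that of `q`. A solution of such a second-order recurrence on `ℤ` is
determined by its values at `0` and `1`, and both sequences take the values `0` and `a b + 4` there.
-/

variable {R : Type*} [CommRing R]

def BiperiodicRec (a b : R) (f : ℤ → R) : Prop :=
  ∀ n : ℤ, f n = (if Even n then a else b) * f (n - 1) + f (n - 2)

namespace BiperiodicRec

variable {a b : R} {f g : ℤ → R}

theorem of_even_of_odd (he : ∀ n : ℤ, Even n → f n = a * f (n - 1) + f (n - 2))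
    (ho : ∀ n : ℤ, Odd n → f n = b * f (n - 1) + f (n - 2)) : BiperiodicRec a b f := by
  intro n
  split_ifs with hn
  · exact he n hn
  · exact ho n (Int.not_even_iff_odd.mp hn)

theorem add (hf : BiperiodicRec a b f) (hg : BiperiodicRec a b g) :
    BiperiodicRec a b (fun n => f n + g n) := fun n => by
  simp only [hf n, hg n]; ring

theorem const_mul (c : R) (hf : BiperiodicRec a b f) : BiperiodicRec a b (fun n => c * f n) :=
  fun n => by simp only [hf n]; ring

theorem comp_add_odd {k : ℤ} (hk : Odd k) (hf : BiperiodicRec a b f) :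
    BiperiodicRec b a (fun n => f (n + k)) := fun n => by
  have hpar : Even (n + k) ↔ ¬Even n := by
    rw [Int.even_add, iff_false_intro (Int.not_even_iff_odd.mpr hk), iff_false]
  beta_reduce
  rw [hf (n + k), if_congr hpar rfl rfl, ite_not, show n + k - 1 = n - 1 + k by ring,
    show n + k - 2 = n - 2 + k by ring]

theorem eq_of_eq_zero_of_eq_one (hf : BiperiodicRec a b f) (hg : BiperiodicRec a b g) (h0 : f 0 = g 0)
    (h1 : f 1 = g 1) : f = g := by
  suffices key : ∀ n : ℤ, f n = g n ∧ f (n + 1) = g (n + 1) from funext fun n => (key n).1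
  intro n
  induction n using Int.induction_on with
  | zero => exact ⟨h0, by simpa using h1⟩
  | succ k ih =>
    refine ⟨ih.2, ?_⟩
    rw [hf, hg, show (k : ℤ) + 1 + 1 - 1 = k + 1 by ring, show (k : ℤ) + 1 + 1 - 2 = k by ring,
      ih.1, ih.2]
  | pred k ih =>
    have hfk := hf (-k + 1)
    have hgk := hg (-k + 1)
    rw [show -(k : ℤ) + 1 - 1 = -k by ring, show -(k : ℤ) + 1 - 2 = -k - 1 by ring] at hfk hgk
    rw [ih.1, ih.2] at hfk
    exact ⟨add_left_cancel (hfk.symm.trans hgk), by simpa using ih.1⟩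

end BiperiodicRec

theorem biperiodic_fib_eq_lucas_sum (a b : ℝ)
    (q : ℤ → ℝ) (hq0 : q 0 = 0) (hq1 : q 1 = 1)
    (hqe : ∀ n : ℤ, Even n → q n = a * q (n - 1) + q (n - 2))
    (hqo : ∀ n : ℤ, Odd n → q n = b * q (n - 1) + q (n - 2))
    (l : ℤ → ℝ) (hl0 : l 0 = 2) (hl1 : l 1 = a)
    (hle : ∀ n : ℤ, Even n → l n = b * l (n - 1) + l (n - 2))
    (hlo : ∀ n : ℤ, Odd n → l n = a * l (n - 1) + l (n - 2)) :
    ∀ n : ℤ, (a * b + 4) * q n = l (n - 1) + l (n + 1) := by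
  have hq : BiperiodicRec a b q := .of_even_of_odd hqe hqo
  have hl : BiperiodicRec b a l := .of_even_of_odd hle hlo
  have hl_neg_one : l (-1) = -a := by
    have h := hl 1
    norm_num [hl0, hl1] at h
    linear_combination -h
  have hl_two : l 2 = a * b + 2 := by
    have h := hl 2
    norm_num [hl0, hl1] at h
    linear_combination h
  have hsum : BiperiodicRec a b (fun n => l (n - 1) + l (n + 1)) := by
    simpa only [sub_eq_add_neg] using (hl.comp_add_odd odd_neg_one).add (hl.comp_add_odd odd_one)
  have key := (hq.const_mul (a * b + 4)).eq_of_eq_zero_of_eq_one hsum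
    (by norm_num [hq0, hl1, hl_neg_one]) (by norm_num [hq1, hl0, hl_two]; ring)
  exact fun n => congrFun key n
end

section
/- Let a, b be real numbers with a > 0 and b > 0, and let α = (a*b + √(a²b² + 4ab))/2 and β = (a*b − √(a²b² + 4ab))/2. Then for every natural number m, the bi-periodic Lucas numbers satisfy l (2m) = (α^(2m) + β^(2m)) / (a*b)^m and l (2m+1) = a * (α^(2m+1) + β^(2m+1)) / (a*b)^(m+1). (This is the Binet formula for the bi-periodic Lucas sequence, Equation (5).) -/
/-!
Multiplying by the right powers of `a * b` turns the bi-periodic recurrence into the single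
recurrence `s (n + 2) = a * b * (s (n + 1) + s n)`: if `l (2 * m) = s (2 * m) / (a * b) ^ m` and
`l (2 * m + 1) = a * s (2 * m + 1) / (a * b) ^ (m + 1)`, one even and one odd step of `l` are
exactly two steps of `s`. The power sums `α ^ n + β ^ n` of the roots of `X ^ 2 = a b X + a b`
solve that recurrence with the initial values `2` and `α + β = a * b`.
-/

section BiperiodicLucas

variable {K : Type*} [Field K] {a b : K} {l : ℤ → K}

lemma biperiodicLucas_even_step (hle : ∀ n : ℤ, Even n → l n = b * l (n - 1) + l (n - 2))
    (m : ℕ) : l (2 * (m + 1 : ℕ)) = b * l (2 * m + 1) + l (2 * m) := by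
  rw [hle _ (even_two_mul _)]
  push_cast
  ring_nf

lemma biperiodicLucas_odd_step (hlo : ∀ n : ℤ, Odd n → l n = a * l (n - 1) + l (n - 2))
    (m : ℕ) : l (2 * (m + 1 : ℕ) + 1) = a * l (2 * (m + 1 : ℕ)) + l (2 * m + 1) := by
  rw [hlo _ (odd_two_mul_add_one _)]
  push_cast
  ring_nf

theorem biperiodicLucas_eq_div_of_recurrence (hab : a * b ≠ 0) (hl0 : l 0 = 2) (hl1 : l 1 = a)
    (hle : ∀ n : ℤ, Even n → l n = b * l (n - 1) + l (n - 2))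
    (hlo : ∀ n : ℤ, Odd n → l n = a * l (n - 1) + l (n - 2))
    {s : ℕ → K} (hs0 : s 0 = 2) (hs1 : s 1 = a * b)
    (hs : ∀ n, s (n + 2) = a * b * (s (n + 1) + s n)) (m : ℕ) :
    l (2 * m) = s (2 * m) / (a * b) ^ m ∧
      l (2 * m + 1) = a * s (2 * m + 1) / (a * b) ^ (m + 1) := by
  have ha : a ≠ 0 := left_ne_zero_of_mul hab
  have hb : b ≠ 0 := right_ne_zero_of_mul hab
  induction m with
  | zero => simp [hl0, hl1, hs0, hs1, hab]
  | succ m ih =>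
    obtain ⟨ih_even, ih_odd⟩ := ih
    have h_even : l (2 * (m + 1 : ℕ)) = s (2 * (m + 1)) / (a * b) ^ (m + 1) := by
      rw [biperiodicLucas_even_step hle, ih_even, ih_odd, show 2 * (m + 1) = 2 * m + 2 by ring,
        hs]
      field_simp
      ring
    refine ⟨h_even, ?_⟩
    rw [biperiodicLucas_odd_step hlo, h_even, ih_odd,
      show 2 * (m + 1) + 1 = 2 * m + 1 + 2 by ring, hs, show 2 * m + 1 + 1 = 2 * (m + 1) by ring]
    field_simp
    ring

end BiperiodicLucas

lemma pow_add_pow_add_two {R : Type*} [CommRing R] {c x y : R} (hx : x ^ 2 = c * x + c)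
    (hy : y ^ 2 = c * y + c) (n : ℕ) :
    x ^ (n + 2) + y ^ (n + 2) = c * (x ^ (n + 1) + y ^ (n + 1) + (x ^ n + y ^ n)) := by
  linear_combination x ^ n * hx + y ^ n * hy

lemma sq_half_add_eq {K : Type*} [Field K] [NeZero (2 : K)] {p s : K}
    (hs : s ^ 2 = p ^ 2 + 4 * p) : ((p + s) / 2) ^ 2 = p * ((p + s) / 2) + p := by
  field_simp
  linear_combination hs

theorem biperiodic_lucas_binet (a b : ℝ) (ha : 0 < a) (hb : 0 < b)
    (l : ℤ → ℝ) (hl0 : l 0 = 2) (hl1 : l 1 = a)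
    (hle : ∀ n : ℤ, Even n → l n = b * l (n - 1) + l (n - 2))
    (hlo : ∀ n : ℤ, Odd n → l n = a * l (n - 1) + l (n - 2))
    (α β : ℝ)
    (hα : α = (a * b + Real.sqrt (a ^ 2 * b ^ 2 + 4 * (a * b))) / 2)
    (hβ : β = (a * b - Real.sqrt (a ^ 2 * b ^ 2 + 4 * (a * b))) / 2) :
    ∀ m : ℕ, l (2 * m) = (α ^ (2 * m) + β ^ (2 * m)) / (a * b) ^ m ∧
      l (2 * m + 1) = a * (α ^ (2 * m + 1) + β ^ (2 * m + 1)) / (a * b) ^ (m + 1) := by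
  have hab : 0 < a * b := mul_pos ha hb
  have hsqrt : Real.sqrt (a ^ 2 * b ^ 2 + 4 * (a * b)) ^ 2 = (a * b) ^ 2 + 4 * (a * b) := by
    rw [Real.sq_sqrt (by positivity), mul_pow]
  have hα2 : α ^ 2 = a * b * α + a * b := hα ▸ sq_half_add_eq hsqrt
  have hβ2 : β ^ 2 = a * b * β + a * b := by
    rw [hβ, sub_eq_add_neg]
    exact sq_half_add_eq (by rwa [neg_sq])
  exact biperiodicLucas_eq_div_of_recurrence (s := fun n ↦ α ^ n + β ^ n) hab.ne' hl0 hl1 hle hlo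
    (by norm_num) (by rw [pow_one, pow_one, hα, hβ]; ring) (pow_add_pow_add_two hα2 hβ2)
end

section
/- For all real numbers a, b, the formal power series identity (1 − (a*b + 2)*X² + X⁴) * L(X) = a*X + a*X³ holds in ℝ⟦X⟧, where L(X) is the formal power series whose n-th coefficient is l n if n is odd and 0 if n is even. (This is the generating function of the odd-subscripted bi-periodic Lucas numbers, Equation (8).) -/
/-!
Eliminating the even-indexed terms from the two recurrences gives
`l (k + 4) = (a * b + 2) * l (k + 2) - l k` for every odd `k`, which kills all coefficients of
degree at least 4 in the product. Running the same recurrence backwards to `k = -1`, where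
`l (-1) = -a`, yields `l 3` and hence the coefficient `a` in degree 3.
-/

open PowerSeries

theorem PowerSeries.mul_mk_eq_of_recurrence {R : Type*} [CommRing R] (c : R) (f : ℕ → R)
    (hf : ∀ n, f (n + 4) = c * f (n + 2) - f n) :
    (1 - C c * X ^ 2 + X ^ 4) * mk f =
      C (f 0) + C (f 1) * X + C (f 2 - c * f 0) * X ^ 2 + C (f 3 - c * f 1) * X ^ 3 := by
  ext n
  obtain _ | _ | _ | _ | n := n <;>
    simp [sub_mul, add_mul, mul_assoc, coeff_X_pow_mul', coeff_X_pow, hf]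

section BiperiodicLucas

variable {R : Type*} [CommRing R] {a b : R} {l : ℤ → R}

theorem biperiodicLucas_add_four (hle : ∀ n : ℤ, Even n → l n = b * l (n - 1) + l (n - 2))
    (hlo : ∀ n : ℤ, Odd n → l n = a * l (n - 1) + l (n - 2)) {k : ℤ} (hk : Odd k) :
    l (k + 4) = (a * b + 2) * l (k + 2) - l k := by
  have h4 := hlo (k + 4) (hk.add_even (by decide))
  have h3 := hle (k + 3) (hk.add_odd (by decide))
  have h2 := hlo (k + 2) (hk.add_even (by decide))
  rw [show k + 4 - 1 = k + 3 by ring, show k + 4 - 2 = k + 2 by ring] at h4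
  rw [show k + 3 - 1 = k + 2 by ring, show k + 3 - 2 = k + 1 by ring] at h3
  rw [show k + 2 - 1 = k + 1 by ring, show k + 2 - 2 = k by ring] at h2
  linear_combination h4 + a * h3 - h2

theorem biperiodicLucas_oddPart_add_four
    (hle : ∀ n : ℤ, Even n → l n = b * l (n - 1) + l (n - 2))
    (hlo : ∀ n : ℤ, Odd n → l n = a * l (n - 1) + l (n - 2)) (n : ℕ) :
    (if Odd (n + 4) then l ↑(n + 4) else 0) =
      (a * b + 2) * (if Odd (n + 2) then l ↑(n + 2) else 0) - if Odd n then l n else 0 := by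
  have h4 : Odd (n + 4) ↔ Odd n := by simp [Nat.odd_add, show Even 4 by decide]
  have h2 : Odd (n + 2) ↔ Odd n := by simp [Nat.odd_add]
  by_cases hn : Odd n
  · simp only [h4, h2, hn, if_true]
    push_cast
    exact biperiodicLucas_add_four hle hlo (by exact_mod_cast hn)
  · simp [h4, h2, hn]

theorem biperiodicLucas_neg_one (hl0 : l 0 = 2) (hl1 : l 1 = a)
    (hlo : ∀ n : ℤ, Odd n → l n = a * l (n - 1) + l (n - 2)) : l (-1) = -a := by
  have h1 := hlo 1 odd_one
  norm_num [hl0, hl1] at h1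
  linear_combination -h1

theorem biperiodicLucas_three (hl0 : l 0 = 2) (hl1 : l 1 = a)
    (hle : ∀ n : ℤ, Even n → l n = b * l (n - 1) + l (n - 2))
    (hlo : ∀ n : ℤ, Odd n → l n = a * l (n - 1) + l (n - 2)) :
    l 3 = (a * b + 2) * a + a := by
  have h := biperiodicLucas_add_four hle hlo (k := -1) (by decide)
  norm_num [hl1, biperiodicLucas_neg_one hl0 hl1 hlo] at h
  exact h

end BiperiodicLucas

theorem biperiodic_lucas_odd_gen_fun (a b : ℝ)
    (l : ℤ → ℝ) (hl0 : l 0 = 2) (hl1 : l 1 = a)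
    (hle : ∀ n : ℤ, Even n → l n = b * l (n - 1) + l (n - 2))
    (hlo : ∀ n : ℤ, Odd n → l n = a * l (n - 1) + l (n - 2)) :
    (1 - PowerSeries.C (a * b + 2) * PowerSeries.X ^ 2 + PowerSeries.X ^ 4) *
        PowerSeries.mk (fun n : ℕ => if Odd n then l n else 0) =
      PowerSeries.C a * PowerSeries.X + PowerSeries.C a * PowerSeries.X ^ 3 := by
  rw [mul_mk_eq_of_recurrence _ _ (biperiodicLucas_oddPart_add_four hle hlo)]
  norm_num [hl1, biperiodicLucas_three hl0 hl1 hle hlo]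
end
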